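/- Let f ∈ C¹[a,b] be such that f(t) ≠ 0 for all t ∈ [a,b]. Then 1/f ∈ C¹[a,b] and ‖1/f‖_{C¹} ≤ ‖1/f‖_{C⁰}² ‖f‖_{C¹}, where ‖1/f‖_{C⁰} = sup_t |f(t)|^{−1}. Hence C¹[a,b] admits norm-controlled inversion in C[a,b] with control function h(s,t) = s t². -/

import Mathlib

open Set

noncomputable def normC0 (a b : ℝ) (f : ℝ → ℝ) : ℝ :=
  ⨆ t : Icc a b, |f t.1|

noncomputable def normC1 (a b : ℝ) (f : ℝ → ℝ) : ℝ :=
  normC0 a b f + normC0 a b (derivWithin f (Icc a b))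

/-!
Since `(1/f)' = -f'/f²`, pointwise `|(1/f)'| ≤ ‖1/f‖² |f'|`. For the zeroth-order part, evaluating
`|1/f| * |f| = 1` at one point gives `1 ≤ ‖1/f‖ ‖f‖`, hence `‖1/f‖ ≤ ‖1/f‖² ‖f‖`.
-/

variable {a b : ℝ}

section NormC0

variable {g : ℝ → ℝ}

lemma bddAbove_range_abs_of_continuousOn (hg : ContinuousOn g (Icc a b)) :
    BddAbove (range fun t : Icc a b => |g t|) := by
  rw [← image_eq_range (fun t => |g t|)]
  exact (isCompact_Icc.image_of_continuousOn hg.abs).bddAbove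

lemma abs_le_normC0 (hg : ContinuousOn g (Icc a b)) {t : ℝ} (ht : t ∈ Icc a b) :
    |g t| ≤ normC0 a b g :=
  le_ciSup (bddAbove_range_abs_of_continuousOn hg) ⟨t, ht⟩

lemma normC0_nonneg : 0 ≤ normC0 a b g :=
  Real.iSup_nonneg fun _ => abs_nonneg _

lemma normC0_le (hab : a ≤ b) {M : ℝ} (hM : ∀ t ∈ Icc a b, |g t| ≤ M) :
    normC0 a b g ≤ M :=
  have : Nonempty (Icc a b) := ⟨⟨a, left_mem_Icc.2 hab⟩⟩
  ciSup_le fun t => hM t t.2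

end NormC0

section Inverse

variable {f : ℝ → ℝ}

lemma one_le_normC0_inv_mul_normC0 (hab : a ≤ b) (hf : ContinuousOn f (Icc a b))
    (hne : ∀ t ∈ Icc a b, f t ≠ 0) :
    1 ≤ normC0 a b (fun t => (f t)⁻¹) * normC0 a b f := by
  have ha : a ∈ Icc a b := left_mem_Icc.2 hab
  calc 1 = |(f a)⁻¹| * |f a| := by rw [← abs_mul, inv_mul_cancel₀ (hne a ha), abs_one]
    _ ≤ normC0 a b (fun t => (f t)⁻¹) * normC0 a b f :=
      mul_le_mul (abs_le_normC0 (hf.inv₀ hne) ha) (abs_le_normC0 hf ha) (abs_nonneg _)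
        normC0_nonneg

lemma normC0_derivWithin_inv_le (hab : a < b) (hf : ContDiffOn ℝ 1 f (Icc a b))
    (hne : ∀ t ∈ Icc a b, f t ≠ 0) :
    normC0 a b (derivWithin (fun t => (f t)⁻¹) (Icc a b)) ≤
      normC0 a b (fun t => (f t)⁻¹) ^ 2 * normC0 a b (derivWithin f (Icc a b)) := by
  have hf' : ContinuousOn (derivWithin f (Icc a b)) (Icc a b) :=
    hf.continuousOn_derivWithin (uniqueDiffOn_Icc hab) le_rfl
  refine normC0_le hab.le fun t ht => ?_
  rw [derivWithin_fun_inv' (hf.differentiableOn one_ne_zero t ht) (hne t ht)]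
  calc |-derivWithin f (Icc a b) t / f t ^ 2|
      = |(f t)⁻¹| ^ 2 * |derivWithin f (Icc a b) t| := by
        rw [abs_div, abs_neg, abs_pow, abs_inv, inv_pow, div_eq_inv_mul]
    _ ≤ normC0 a b (fun t => (f t)⁻¹) ^ 2 * normC0 a b (derivWithin f (Icc a b)) := by
      gcongr
      exacts [abs_le_normC0 (hf.continuousOn.inv₀ hne) ht, abs_le_normC0 hf' ht]

end Inverse

theorem stmt7 (a b : ℝ) (hab : a < b) (f : ℝ → ℝ)
    (hf : ContDiffOn ℝ 1 f (Icc a b)) (hne : ∀ t ∈ Icc a b, f t ≠ 0) :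
    ContDiffOn ℝ 1 (fun t => (f t)⁻¹) (Icc a b) ∧
      normC1 a b (fun t => (f t)⁻¹) ≤ normC0 a b (fun t => (f t)⁻¹) ^ 2 * normC1 a b f := by
  refine ⟨hf.inv hne, ?_⟩
  set N := normC0 a b (fun t => (f t)⁻¹)
  calc normC1 a b (fun t => (f t)⁻¹)
      ≤ N * (N * normC0 a b f) + N ^ 2 * normC0 a b (derivWithin f (Icc a b)) :=
        add_le_add (le_mul_of_one_le_right normC0_nonneg
          (one_le_normC0_inv_mul_normC0 hab.le hf.continuousOn hne))
          (normC0_derivWithin_inv_le hab hf hne)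
    _ = N ^ 2 * normC1 a b f := by unfold normC1; ring
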